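/- Let η, θ ∈ ℝ with 0 < η < 1 and η > A₊², where A₊ = (1+η)cos(2θ)/2, and let v₀ = (sin θ, cos θ) ∈ ℝ². For t ∈ ℕ let P_p(t) = (1 − r_z(t))/2, where r_z(t) is the second component of G_p(η,θ)^t · v₀ and G_p(η,θ) = [[η cos 2θ, sin 2θ],[−η sin 2θ, cos 2θ]]. Then P_p(t) converges to 1/2 as t → ∞; moreover |P_p(t) − 1/2| ≤ C·(√η)^t for the constant C = (η·|sin 2θ·sin θ| + (B + |A₋|)·|cos θ|)/(2B), where A₋ = (1−η)cos(2θ)/2 and B = √(η − A₊²). Hence the success probability of Grover's algorithm with phase-flip noise decays exponentially toward 1/2. -/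

import Mathlib

open Matrix Real Filter

/-- The noisy Grover iteration with phase-flip noise of parameter `η`. -/
noncomputable def Gp (η θ : ℝ) : Matrix (Fin 2) (Fin 2) ℝ :=
  !![η * Real.cos (2 * θ), Real.sin (2 * θ); -η * Real.sin (2 * θ), Real.cos (2 * θ)]

/-!
By Cayley–Hamilton, `G = Gp η θ` satisfies `G² - 2A₊ G + η = 0`, whose roots are `z = A₊ ± B i`
with `|z| = √η`. Hence `J = (G - A₊) / B` squares to `-1`, so `i ↦ J` embeds `ℂ` into the
`2 × 2` real matrices and sends `z` to `G`. Therefore `Gᵗ = Re (zᵗ) + Im (zᵗ) J`, and both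
coefficients are bounded by `|z|ᵗ = (√η)ᵗ`; the paper's `φ` is the argument of `z`.
-/

theorem Matrix.sq_sub_trace_smul_add_det_smul_fin_two {R : Type*} [CommRing R]
    (M : Matrix (Fin 2) (Fin 2) R) : M ^ 2 - M.trace • M + M.det • 1 = 0 := by
  nontriviality R
  simpa [charpoly_fin_two, Algebra.smul_def] using M.aeval_self_charpoly

theorem pow_eq_of_sq_sub_smul_add_normSq_smul_eq_zero {R : Type*} [Ring R] [Algebra ℝ R]
    {M : R} {z : ℂ} (hz : z.im ≠ 0)
    (hM : M ^ 2 - (2 * z.re) • M + Complex.normSq z • 1 = 0) (n : ℕ) :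
    M ^ n = (z ^ n).re • 1 + (z ^ n).im • (z.im⁻¹ • (M - z.re • 1)) := by
  set J := z.im⁻¹ • (M - z.re • 1)
  have hsq : (M - z.re • 1) * (M - z.re • 1) = -z.im ^ 2 • 1 := by
    rw [Complex.normSq_apply, sq] at hM
    simp only [sub_mul, mul_sub, one_mul, mul_one, smul_mul_assoc, mul_smul_comm]
    linear_combination (norm := module) hM
  have hJ : J * J = -1 := by
    rw [smul_mul_smul, hsq, smul_smul, show z.im⁻¹ * z.im⁻¹ * -z.im ^ 2 = -1 by field_simp,
      neg_one_smul]
  have hMJ : Complex.liftAux J hJ z = M := by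
    rw [Complex.liftAux_apply, Algebra.algebraMap_eq_smul_one, smul_smul, mul_inv_cancel₀ hz,
      one_smul, add_sub_cancel]
  rw [← hMJ, ← map_pow, Complex.liftAux_apply, Algebra.algebraMap_eq_smul_one]

theorem Complex.abs_re_mul_add_im_mul_le (w : ℂ) (a b : ℝ) :
    |w.re * a + w.im * b| ≤ ‖w‖ * (|a| + |b|) :=
  calc |w.re * a + w.im * b| ≤ |w.re| * |a| + |w.im| * |b| := by
        simpa only [abs_mul] using abs_add_le (w.re * a) (w.im * b)
    _ ≤ ‖w‖ * |a| + ‖w‖ * |b| := by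
        gcongr
        exacts [w.abs_re_le_norm, w.abs_im_le_norm]
    _ = ‖w‖ * (|a| + |b|) := by ring

theorem Gp_trace (η θ : ℝ) : (Gp η θ).trace = (1 + η) * cos (2 * θ) := by
  rw [trace_fin_two]
  simp only [Gp, of_apply, cons_val', cons_val_zero, cons_val_one, cons_val_fin_one]
  ring

theorem Gp_det (η θ : ℝ) : (Gp η θ).det = η := by
  rw [det_fin_two]
  simp only [Gp, of_apply, cons_val', cons_val_zero, cons_val_one, cons_val_fin_one]
  linear_combination η * sin_sq_add_cos_sq (2 * θ)

theorem Gp_pow_mulVec_apply_one {η θ Ap Am B : ℝ}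
    (hAp : Ap = (1 + η) * cos (2 * θ) / 2) (hAm : Am = (1 - η) * cos (2 * θ) / 2)
    (hB : B ^ 2 = η - Ap ^ 2) (hB0 : B ≠ 0) (t : ℕ) (x y : ℝ) :
    (Gp η θ ^ t *ᵥ ![x, y]) 1 = ((⟨Ap, B⟩ : ℂ) ^ t).re * y +
      ((⟨Ap, B⟩ : ℂ) ^ t).im * ((Am * y - η * sin (2 * θ) * x) / B) := by
  have hchar : Gp η θ ^ 2 - (2 * (⟨Ap, B⟩ : ℂ).re) • Gp η θ
      + Complex.normSq ⟨Ap, B⟩ • 1 = 0 := by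
    have htrace : 2 * (⟨Ap, B⟩ : ℂ).re = (Gp η θ).trace := by rw [Gp_trace, hAp]; ring
    have hdet : Complex.normSq ⟨Ap, B⟩ = (Gp η θ).det := by
      rw [Gp_det, Complex.normSq_mk]; linear_combination hB
    rw [htrace, hdet]
    exact (Gp η θ).sq_sub_trace_smul_add_det_smul_fin_two
  rw [pow_eq_of_sq_sub_smul_add_normSq_smul_eq_zero hB0 hchar]
  simp only [Gp, mulVec, dotProduct, Fin.sum_univ_two, Matrix.add_apply, Matrix.smul_apply,
    Matrix.sub_apply, smul_eq_mul, of_apply, cons_val', cons_val_zero, cons_val_one,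
    cons_val_fin_one, one_apply_eq, one_apply_ne one_ne_zero]
  rw [hAm, hAp]
  ring

theorem abs_Gp_pow_mulVec_apply_one_le {η θ Ap Am B : ℝ}
    (hAp : Ap = (1 + η) * cos (2 * θ) / 2) (hAm : Am = (1 - η) * cos (2 * θ) / 2)
    (hB : B ^ 2 = η - Ap ^ 2) (hB0 : 0 < B) (t : ℕ) (x y : ℝ) :
    |(Gp η θ ^ t *ᵥ ![x, y]) 1| ≤ (η * |sin (2 * θ) * x| + (B + |Am|) * |y|) / B * √η ^ t := by
  have hη : 0 ≤ η := by nlinarith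
  have hnorm : ‖(⟨Ap, B⟩ : ℂ)‖ = √η := by
    rw [Complex.norm_def, Complex.normSq_mk]; congr 1; linear_combination hB
  set Y := Am * y - η * sin (2 * θ) * x
  have hY : |Y| ≤ |Am| * |y| + η * |sin (2 * θ) * x| := by
    simpa only [Y, abs_mul, mul_assoc, abs_of_nonneg hη] using
      abs_sub (Am * y) (η * (sin (2 * θ) * x))
  have hw := ((⟨Ap, B⟩ : ℂ) ^ t).abs_re_mul_add_im_mul_le y (Y / B)
  rw [norm_pow, hnorm, abs_div, abs_of_pos hB0] at hw
  rw [Gp_pow_mulVec_apply_one hAp hAm hB hB0.ne']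
  calc _ ≤ √η ^ t * (|y| + |Y| / B) := hw
    _ = √η ^ t * (B * |y| + |Y|) / B := by field_simp
    _ ≤ √η ^ t * (B * |y| + (|Am| * |y| + η * |sin (2 * θ) * x|)) / B := by gcongr
    _ = _ := by ring

theorem Gp_success_probability_decays_to_half_general (η θ : ℝ) (hη1 : η < 1)
    (Ap Am B : ℝ)
    (hAp : Ap = (1 + η) * Real.cos (2 * θ) / 2)
    (hAm : Am = (1 - η) * Real.cos (2 * θ) / 2)
    (hB : B = Real.sqrt (η - Ap ^ 2))
    (h : Ap ^ 2 < η)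
    (P : ℕ → ℝ)
    (hP : P = fun t : ℕ =>
      (1 - ((Gp η θ) ^ t).mulVec ![Real.sin θ, Real.cos θ] 1) / 2) :
    Filter.Tendsto P Filter.atTop (nhds (1 / 2)) ∧
    (∀ t : ℕ, |P t - 1 / 2| ≤
      ((η * |Real.sin (2 * θ) * Real.sin θ| + (B + |Am|) * |Real.cos θ|) / (2 * B)) *
        (Real.sqrt η) ^ t) := by
  have hB0 : 0 < B := hB ▸ Real.sqrt_pos.mpr (sub_pos.mpr h)
  have hB2 : B ^ 2 = η - Ap ^ 2 := hB ▸ Real.sq_sqrt (sub_pos.mpr h).le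
  have hbound (t : ℕ) : |P t - 1 / 2| ≤
      ((η * |sin (2 * θ) * sin θ| + (B + |Am|) * |cos θ|) / (2 * B)) * √η ^ t := by
    have hrz := abs_Gp_pow_mulVec_apply_one_le hAp hAm hB2 hB0 t (sin θ) (cos θ)
    simp only [hP, show ∀ r : ℝ, (1 - r) / 2 - 1 / 2 = -(r / 2) by intro; ring, abs_neg, abs_div,
      abs_two]
    calc _ ≤ (η * |sin (2 * θ) * sin θ| + (B + |Am|) * |cos θ|) / B * √η ^ t / 2 := by gcongr
      _ = _ := by ring
  refine ⟨?_, hbound⟩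
  rw [← tendsto_sub_nhds_zero_iff]
  refine squeeze_zero_norm hbound ?_
  simpa using (tendsto_pow_atTop_nhds_zero_of_lt_one (Real.sqrt_nonneg η)
    ((Real.sqrt_lt' one_pos).2 (by rwa [one_pow]))).const_mul _

theorem Gp_success_probability_decays_to_half (η θ : ℝ) (hη0 : 0 < η) (hη1 : η < 1)
    (Ap Am B : ℝ)
    (hAp : Ap = (1 + η) * Real.cos (2 * θ) / 2)
    (hAm : Am = (1 - η) * Real.cos (2 * θ) / 2)
    (hB : B = Real.sqrt (η - Ap ^ 2))
    (h : Ap ^ 2 < η)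
    (P : ℕ → ℝ)
    (hP : P = fun t : ℕ =>
      (1 - ((Gp η θ) ^ t).mulVec ![Real.sin θ, Real.cos θ] 1) / 2) :
    Filter.Tendsto P Filter.atTop (nhds (1 / 2)) ∧
    (∀ t : ℕ, |P t - 1 / 2| ≤
      ((η * |Real.sin (2 * θ) * Real.sin θ| + (B + |Am|) * |Real.cos θ|) / (2 * B)) *
        (Real.sqrt η) ^ t) :=
  Gp_success_probability_decays_to_half_general η θ hη1 Ap Am B hAp hAm hB h P hP
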